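/- Let n ≥ 2 and 0 ≤ ℓ' ≤ ℓ be integers and set q = exp(2πi/(ℓ+2)). Then for every k ∈ {1,…,ℓ+1}, the following identity holds in ℂ[z_1,…,z_{2n−2}, w]: s_{λ_{n,ℓ,ℓ'}}(z_1,…,z_{2n−2}, w, q^k w) = w^{ℓ'} · U_{ℓ'}(1, q^k) · ( ∏_{m=1}^{2n−2} ∏_{t ∈ {1,…,ℓ+1}, t ≠ k} (z_m − q^t w) ) · s_{λ_{n−1,ℓ,ℓ'}}(z_1,…,z_{2n−2}). (Equivalently, the inner product over t equals U_{ℓ+1}(z_m, w)/(z_m − q^k w), since U_{ℓ+1}(x,w) = ∏_{t=1}^{ℓ+1}(x − q^t w).) -/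

import Mathlib

/-- The shifted Vandermonde determinant `Δ_λ(v) = det (v_i ^ (λ_j + N - j))`
(indices `j` one-based, so the exponent is `λ j + (N - 1 - j)` for zero-based `j`). -/
def shiftedVdm {R : Type*} [CommRing R] {N : ℕ} (lam : Fin N → ℕ) (v : Fin N → R) : R :=
  Matrix.det (Matrix.of fun i j : Fin N => v i ^ (lam j + (N - 1 - (j : ℕ))))

/-- The Vandermonde product `Δ(v) = ∏_{i<j} (v i - v j)`. -/
def vdmProd {R : Type*} [CommRing R] {N : ℕ} (v : Fin N → R) : R :=
  ∏ i : Fin N, ∏ j ∈ Finset.Ioi i, (v i - v j)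

/-- The 2-staircase partition `λ_{n,ℓ,ℓ'}` of length `2n`:
its `(2j-1)`-th part is `(n-j)ℓ + ℓ'` and its `(2j)`-th part is `(n-j)ℓ` (1-based). -/
def twoStaircase (n ℓ ℓ' : ℕ) : Fin (2 * n) → ℕ := fun t =>
  if (t : ℕ) % 2 = 0 then (n - 1 - (t : ℕ) / 2) * ℓ + ℓ'
  else (n - ((t : ℕ) + 1) / 2) * ℓ

/-- The staircase partition `μ_{N,h} = ((N-1)h, (N-2)h, …, h, 0)`. -/
def staircasePart (N h : ℕ) : Fin N → ℕ := fun t => (N - 1 - (t : ℕ)) * h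

/-- `exp(2πi/d)`. -/
noncomputable def qRoot (d : ℕ) : ℂ := Complex.exp (2 * Real.pi * Complex.I / (d : ℂ))

/-!
The exponents `λ_j + 2n - 1 - j` of `Δ_λ` for `λ = λ_{n,ℓ,ℓ'}` drop by `ℓ + 2` every two columns
and end with `ℓ' + 1, 0`. Subtracting `w ^ (ℓ + 2)` times column `j + 2` from column `j` turns the
entries `z_i ^ e_j` into `z_i ^ e_{j+2} (z_i ^ (ℓ + 2) - w ^ (ℓ + 2))`, which vanish in the rows of
`w` and `q^k w` since `(q^k w) ^ (ℓ + 2) = w ^ (ℓ + 2)`. The determinant becomes block triangular: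
`Δ_λ(z, w, q^k w) = w ^ (ℓ' + 1) (1 - q^(k(ℓ'+1))) ∏_i (z_i ^ (ℓ + 2) - w ^ (ℓ + 2)) Δ_{λ'}(z)`.
Dividing by `Δ(z, w, q^k w) = (1 - q^k) w ∏_i (z_i - w)(z_i - q^k w) Δ(z)` and splitting
`z ^ (ℓ + 2) - w ^ (ℓ + 2) = ∏_{t=0}^{ℓ+1} (z - q^t w)` leaves the claimed product.
-/

open Finset Matrix

theorem IsPrimitiveRoot.pow_sub_pow_eq_prod_range_sub_pow_mul {R : Type*} [CommRing R]
    [IsDomain R] {ζ : R} {d : ℕ} (h : IsPrimitiveRoot ζ d) (hd : 0 < d) (x y : R) :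
    x ^ d - y ^ d = ∏ t ∈ range d, (x - ζ ^ t * y) := by
  have : NeZero d := ⟨hd.ne'⟩
  rw [h.pow_sub_pow_eq_prod_sub_mul x y hd]
  refine (prod_nbij (ζ ^ ·) (fun t _ => ?_) h.injOn_pow (fun η hη => ?_) fun _ _ => rfl).symm
  · rw [Polynomial.mem_nthRootsFinset hd, ← pow_mul, mul_comm, pow_mul, h.pow_eq_one, one_pow]
  · obtain ⟨t, ht, rfl⟩ := h.eq_pow_of_pow_eq_one ((Polynomial.mem_nthRootsFinset hd 1).1 hη)
    exact ⟨t, mem_coe.2 (mem_range.2 ht), rfl⟩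

theorem IsPrimitiveRoot.pow_sub_pow_eq_mul_prod_erase {R : Type*} [CommRing R] [IsDomain R]
    {ζ : R} {d k : ℕ} (h : IsPrimitiveRoot ζ (d + 1)) (hk : k ∈ Icc 1 d) (x y : R) :
    x ^ (d + 1) - y ^ (d + 1) =
      (x - y) * (x - ζ ^ k * y) * ∏ t ∈ (Icc 1 d).erase k, (x - ζ ^ t * y) := by
  have hrange : range (d + 1) = insert 0 (Icc 1 d) := by
    ext t
    simp only [mem_range, mem_insert, mem_Icc]
    omega
  rw [h.pow_sub_pow_eq_prod_range_sub_pow_mul d.succ_pos, hrange,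
    prod_insert (by simp), ← mul_prod_erase _ _ hk, pow_zero, one_mul, mul_assoc]

section Vandermonde

variable {R : Type*} [CommRing R]

theorem vdmProd_snoc {m : ℕ} (v : Fin m → R) (a : R) :
    vdmProd (Fin.snoc v a : Fin (m + 1) → R) = (∏ i, (v i - a)) * vdmProd v := by
  have hswap : ∀ {N} (v : Fin N → R), vdmProd v = ∏ j, ∏ i ∈ Iio j, (v i - v j) := fun v =>
    prod_comm' (by simp)
  simp only [hswap, Fin.prod_univ_castSucc, Fin.Iio_last_eq_map, ← Fin.map_castSuccEmb_Iio,
    prod_map, Fin.castSuccEmb_apply, Fin.snoc_castSucc, Fin.snoc_last]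
  ring

theorem vdmProd_append_pair {m : ℕ} (z : Fin m → R) (x y : R) :
    vdmProd (Fin.append z ![x, y]) =
      (x - y) * (∏ i, (z i - x) * (z i - y)) * vdmProd z := by
  have : Fin.append z ![x, y] = Fin.snoc (Fin.snoc z x) y := by
    funext i
    refine Fin.lastCases ?_ (fun i => Fin.lastCases ?_ (fun i => ?_) i) i
    · rw [Fin.snoc_last]; exact Fin.append_right z ![x, y] 1
    · rw [Fin.snoc_castSucc, Fin.snoc_last]; exact Fin.append_right z ![x, y] 0
    · rw [Fin.snoc_castSucc, Fin.snoc_castSucc]; exact Fin.append_left z ![x, y] i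
  rw [this, vdmProd_snoc, vdmProd_snoc, Fin.prod_univ_castSucc, prod_mul_distrib]
  simp only [Fin.snoc_castSucc, Fin.snoc_last]
  ring

theorem vdmProd_ne_zero [IsDomain R] {N : ℕ} {v : Fin N → R}
    (hv : Function.Injective v) : vdmProd v ≠ 0 :=
  prod_ne_zero_iff.2 fun _ _ => prod_ne_zero_iff.2 fun _ hj =>
    sub_ne_zero.2 (hv.ne (mem_Ioi.1 hj).ne)

theorem map_shiftedVdm {S F : Type*} [CommRing S] [FunLike F R S] [RingHomClass F R S] (f : F)
    {N : ℕ} (lam : Fin N → ℕ) (v : Fin N → R) :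
    f (shiftedVdm lam v) = shiftedVdm lam (f ∘ v) := by
  change (f : R →+* S) _ = _
  rw [shiftedVdm, RingHom.map_det]
  congr
  ext
  simp

theorem map_vdmProd {S F : Type*} [CommRing S] [FunLike F R S] [RingHomClass F R S] (f : F)
    {N : ℕ} (v : Fin N → R) : f (vdmProd v) = vdmProd (f ∘ v) := by
  simp [vdmProd, map_prod]

end Vandermonde

theorem shiftedVdm_eq_aeval_mul_vdmProd {K A : Type*} [CommRing K] [CommRing A] [Algebra K A]
    {N : ℕ} {lam : Fin N → ℕ} {S : MvPolynomial (Fin N) K}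
    (hS : shiftedVdm lam (fun i => MvPolynomial.X i) = S * vdmProd (fun i => MvPolynomial.X i))
    (v : Fin N → A) : shiftedVdm lam v = MvPolynomial.aeval v S * vdmProd v := by
  simpa [map_shiftedVdm, map_vdmProd, Function.comp_def] using congrArg (MvPolynomial.aeval v) hS

section Determinant

variable {R : Type*} [CommRing R] {m d : ℕ} {E : ℕ → ℕ}

/-- Column operations: subtract `x ^ d` times column `j + 2` from column `j`, for each `j < m`. -/
theorem det_pow_eq_det_pow_mul_sub_pow (hE : ∀ j < m, E j = E (j + 2) + d)
    (v : Fin (m + 2) → R) (x : R) :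
    det (of fun i j : Fin (m + 2) => v i ^ E j) =
      det (of fun i j : Fin (m + 2) =>
        if (j : ℕ) < m then v i ^ E (j + 2) * (v i ^ d - x ^ d) else v i ^ E j) := by
  set N : Matrix (Fin (m + 2)) (Fin (m + 2)) R :=
    of fun c j => if (c : ℕ) = j + 2 then -x ^ d else 0
  have hdet : det (1 + N) = 1 := by
    rw [det_of_isLowerTriangular _ fun i j hij => ?_]
    · simp [N]
    · have hij : i < j := hij
      have : (i : ℕ) ≠ j + 2 := by have := Fin.lt_def.1 hij; omega
      simp [N, one_apply_ne hij.ne, this]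
  have hmul : of (fun i j : Fin (m + 2) => v i ^ E j) * (1 + N) = of fun i j : Fin (m + 2) =>
      if (j : ℕ) < m then v i ^ E (j + 2) * (v i ^ d - x ^ d) else v i ^ E j := by
    ext i j
    rw [Matrix.mul_add, Matrix.mul_one, Matrix.add_apply, mul_apply]
    simp only [of_apply]
    split_ifs with hj
    · rw [Fintype.sum_eq_single ⟨j + 2, by omega⟩ fun c hc => ?_]
      · simp only [N, of_apply, ite_true, hE j hj, pow_add]
        ring
      · have : (c : ℕ) ≠ j + 2 := fun h => hc (Fin.ext h)
        simp [N, this]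
    · refine add_eq_left.2 (sum_eq_zero fun c _ => ?_)
      have : (c : ℕ) ≠ j + 2 := by omega
      simp [N, this]
  rw [← hmul, det_mul, hdet, mul_one]

theorem det_pow_append_pair (hE : ∀ j < m, E j = E (j + 2) + d) (z : Fin m → R) {x y : R}
    (hxy : x ^ d = y ^ d) :
    det (of fun i j : Fin (m + 2) => Fin.append z ![x, y] i ^ E j) =
      (x ^ E m * y ^ E (m + 1) - x ^ E (m + 1) * y ^ E m) * (∏ i, (z i ^ d - x ^ d)) *
        det (of fun i j : Fin m => z i ^ E (j + 2)) := by
  have hblocks : (of fun i j : Fin (m + 2) => if (j : ℕ) < m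
        then Fin.append z ![x, y] i ^ E (j + 2) * (Fin.append z ![x, y] i ^ d - x ^ d)
        else Fin.append z ![x, y] i ^ E j).submatrix finSumFinEquiv finSumFinEquiv =
      fromBlocks (of fun i j : Fin m => (z i ^ d - x ^ d) * z i ^ E (j + 2))
        (of fun (i : Fin m) (j : Fin 2) => z i ^ E (m + j)) 0
        (of fun i j : Fin 2 => ![x, y] i ^ E (m + j)) := by
    ext (i | i) (j | j)
    · simp [mul_comm]
    · simp
    · fin_cases i <;> simp [hxy]
    · simp
  rw [det_pow_eq_det_pow_mul_sub_pow hE _ x, ← det_submatrix_equiv_self finSumFinEquiv,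
    hblocks, det_fromBlocks_zero₂₁, det_fin_two]
  have hA := det_mul_column (fun i => z i ^ d - x ^ d) (of fun i j : Fin m => z i ^ E (j + 2))
  simp only [of_apply] at hA
  simp [hA]
  ring

end Determinant

def twoStaircaseExp (n ℓ ℓ' j : ℕ) : ℕ :=
  (n - 1 - j / 2) * (ℓ + 2) + if j % 2 = 0 then ℓ' + 1 else 0

theorem twoStaircase_add_eq_twoStaircaseExp (n ℓ ℓ' : ℕ) (j : Fin (2 * n)) :
    twoStaircase n ℓ ℓ' j + (2 * n - 1 - j) = twoStaircaseExp n ℓ ℓ' j := by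
  obtain ⟨j, hj⟩ := j
  unfold twoStaircase twoStaircaseExp
  rcases Nat.even_or_odd' j with ⟨a, rfl | rfl⟩ <;>
    obtain ⟨b, rfl⟩ : ∃ b, n = a + 1 + b := ⟨n - a - 1, by omega⟩
  · simp only [show 2 * a % 2 = 0 by omega, show 2 * a / 2 = a by omega, ite_true,
      show a + 1 + b - 1 - a = b by omega, show 2 * (a + 1 + b) - 1 - 2 * a = 2 * b + 1 by omega]
    ring
  · simp only [show (2 * a + 1) % 2 = 1 by omega, show (2 * a + 1) / 2 = a by omega,
      show (2 * a + 1 + 1) / 2 = a + 1 by omega, one_ne_zero, ite_false,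
      show a + 1 + b - 1 - a = b by omega, show a + 1 + b - (a + 1) = b by omega,
      show 2 * (a + 1 + b) - 1 - (2 * a + 1) = 2 * b by omega]
    ring

theorem twoStaircaseExp_eq_add_of_lt {n j : ℕ} (ℓ ℓ' : ℕ) (hj : j < 2 * n + 2) :
    twoStaircaseExp (n + 2) ℓ ℓ' j = twoStaircaseExp (n + 2) ℓ ℓ' (j + 2) + (ℓ + 2) := by
  unfold twoStaircaseExp
  rw [show (j + 2) % 2 = j % 2 by omega,
    show n + 2 - 1 - j / 2 = n + 2 - 1 - (j + 2) / 2 + 1 by omega]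
  ring

theorem twoStaircaseExp_succ_add_two (n ℓ ℓ' j : ℕ) :
    twoStaircaseExp (n + 1) ℓ ℓ' (j + 2) = twoStaircaseExp n ℓ ℓ' j := by
  unfold twoStaircaseExp
  rw [show (j + 2) % 2 = j % 2 by omega, show n + 1 - 1 - (j + 2) / 2 = n - 1 - j / 2 by omega]

theorem twoStaircaseExp_two_mul_add_two (n ℓ ℓ' : ℕ) :
    twoStaircaseExp (n + 2) ℓ ℓ' (2 * n + 2) = ℓ' + 1 := by
  simp [twoStaircaseExp]

theorem twoStaircaseExp_two_mul_add_three (n ℓ ℓ' : ℕ) :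
    twoStaircaseExp (n + 2) ℓ ℓ' (2 * n + 2 + 1) = 0 := by
  simp only [twoStaircaseExp, show (2 * n + 2 + 1) % 2 = 1 by omega, one_ne_zero, ite_false,
    show n + 2 - 1 - (2 * n + 2 + 1) / 2 = 0 by omega, zero_mul, add_zero]

theorem shiftedVdm_twoStaircase {R : Type*} [CommRing R] (n ℓ ℓ' : ℕ) (v : Fin (2 * n) → R) :
    shiftedVdm (twoStaircase n ℓ ℓ') v = det (of fun i j => v i ^ twoStaircaseExp n ℓ ℓ' j) := by
  simp only [shiftedVdm, twoStaircase_add_eq_twoStaircaseExp]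

theorem shiftedVdm_twoStaircase_append {R : Type*} [CommRing R] (p ℓ ℓ' : ℕ)
    (z : Fin (2 * p + 2) → R) {x y : R} (hxy : x ^ (ℓ + 2) = y ^ (ℓ + 2)) :
    shiftedVdm (twoStaircase (p + 2) ℓ ℓ') (Fin.append z ![x, y]) =
      (x ^ (ℓ' + 1) - y ^ (ℓ' + 1)) * (∏ i, (z i ^ (ℓ + 2) - x ^ (ℓ + 2))) *
        shiftedVdm (twoStaircase (p + 1) ℓ ℓ') z := by
  rw [shiftedVdm_twoStaircase, shiftedVdm_twoStaircase]
  refine (det_pow_append_pair (E := twoStaircaseExp (p + 2) ℓ ℓ')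
    (fun j hj => twoStaircaseExp_eq_add_of_lt ℓ ℓ' hj) z hxy).trans ?_
  rw [twoStaircaseExp_two_mul_add_two, twoStaircaseExp_two_mul_add_three]
  simp only [twoStaircaseExp_succ_add_two, pow_zero, mul_one, one_mul]
  rfl

open MvPolynomial in
theorem aeval_twoStaircase_append {A : Type*} [CommRing A] [IsDomain A] [Algebra ℂ A]
    {p ℓ ℓ' k : ℕ} (hk : k ∈ Icc 1 (ℓ + 1))
    {S : MvPolynomial (Fin (2 * (p + 2))) ℂ}
    (hS : shiftedVdm (twoStaircase (p + 2) ℓ ℓ') (fun i => X i) = S * vdmProd (fun i => X i))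
    {S' : MvPolynomial (Fin (2 * (p + 1))) ℂ}
    (hS' : shiftedVdm (twoStaircase (p + 1) ℓ ℓ') (fun i => X i) = S' * vdmProd (fun i => X i))
    (z : Fin (2 * p + 2) → A) (w : A)
    (hΔ : vdmProd (Fin.append z ![w, algebraMap ℂ A (qRoot (ℓ + 2) ^ k) * w]) ≠ 0) :
    aeval (Fin.append z ![w, algebraMap ℂ A (qRoot (ℓ + 2) ^ k) * w]) S =
      w ^ ℓ' * algebraMap ℂ A (∑ t ∈ range (ℓ' + 1), qRoot (ℓ + 2) ^ (k * t)) *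
        (∏ m, ∏ t ∈ (Icc 1 (ℓ + 1)).erase k, (z m - algebraMap ℂ A (qRoot (ℓ + 2) ^ t) * w)) *
        aeval z S' := by
  simp only [map_pow, map_sum] at hΔ ⊢
  set ζ := algebraMap ℂ A (qRoot (ℓ + 2))
  have hζ : IsPrimitiveRoot ζ (ℓ + 2) :=
    (Complex.isPrimitiveRoot_exp _ (by omega)).map_of_injective (algebraMap ℂ A).injective
  have hpow : w ^ (ℓ + 2) = (ζ ^ k * w) ^ (ℓ + 2) := by
    rw [mul_pow, ← pow_mul, mul_comm k, pow_mul, hζ.pow_eq_one, one_pow, one_mul]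
  have hgeom : w ^ (ℓ' + 1) - (ζ ^ k * w) ^ (ℓ' + 1) =
      (w - ζ ^ k * w) * (w ^ ℓ' * ∑ t ∈ range (ℓ' + 1), ζ ^ (k * t)) := by
    have h := mul_neg_geom_sum (ζ ^ k) (ℓ' + 1)
    simp only [← pow_mul] at h
    linear_combination (-w ^ (ℓ' + 1)) * h
  have hbig := shiftedVdm_eq_aeval_mul_vdmProd hS (Fin.append z ![w, ζ ^ k * w])
  rw [shiftedVdm_twoStaircase_append p ℓ ℓ' z hpow, shiftedVdm_eq_aeval_mul_vdmProd hS' z,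
    hgeom] at hbig
  simp only [hζ.pow_sub_pow_eq_mul_prod_erase hk, prod_mul_distrib] at hbig
  refine mul_right_cancel₀ hΔ ?_
  rw [← hbig, vdmProd_append_pair, prod_mul_distrib]
  ring

namespace MvPolynomial

variable {R : Type*} [CommRing R]

theorem X_sub_C_mul_X_ne_zero [Nontrivial R] {σ : Type*} {a b : σ} (h : a ≠ b) (c : R) :
    X a - C c * X b ≠ 0 := fun h0 => by
  classical
  simpa [h.symm] using congrArg (eval (Pi.single a 1)) h0

theorem vdmProd_append_X_ne_zero [IsDomain R] {m : ℕ} {c : R} (hc : c ≠ 1) :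
    vdmProd (Fin.append (fun i : Fin m => (X (Sum.inl i) : MvPolynomial (Fin m ⊕ Unit) R))
      ![X (Sum.inr ()), C c * X (Sum.inr ())]) ≠ 0 := by
  have hdiag : (X (Sum.inr ()) : MvPolynomial (Fin m ⊕ Unit) R) - C c * X (Sum.inr ()) =
      C (1 - c) * X (Sum.inr ()) := by
    rw [map_sub, map_one, sub_mul, one_mul]
  rw [vdmProd_append_pair, hdiag]
  refine mul_ne_zero (mul_ne_zero (mul_ne_zero (C_ne_zero.2 (sub_ne_zero.2 hc.symm)) (X_ne_zero _))
    (prod_ne_zero_iff.2 fun i _ => mul_ne_zero ?_ (X_sub_C_mul_X_ne_zero Sum.inl_ne_inr c)))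
    (vdmProd_ne_zero ((X_injective).comp Sum.inl_injective))
  exact sub_ne_zero.2 ((X_injective).ne Sum.inl_ne_inr)

end MvPolynomial

open MvPolynomial in
/-- Recursion relation for 2-staircase Schur polynomials:  with `q = exp(2πi/(ℓ+2))` and
`1 ≤ k ≤ ℓ+1`, in `ℂ[z_1,…,z_{2n-2},w]` one has
`s_{λ_{n,ℓ,ℓ'}}(z, w, q^k w) = w^{ℓ'} U_{ℓ'}(1,q^k) ∏_m ∏_{t ≠ k} (z_m - q^t w) ·
s_{λ_{n-1,ℓ,ℓ'}}(z)`, where `U_{ℓ'}(1,q^k) = ∑_{t=0}^{ℓ'} q^{kt}`.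
`S` and `S'` are the Schur polynomials of `λ_{n,ℓ,ℓ'}` and `λ_{n-1,ℓ,ℓ'}`,
characterized by `Δ_λ = S * Δ`. -/
theorem twoStaircase_recursion (n ℓ ℓ' : ℕ) (hn : 2 ≤ n)
    (k : ℕ) (hk1 : 1 ≤ k) (hk2 : k ≤ ℓ + 1)
    (S : MvPolynomial (Fin (2 * n)) ℂ)
    (hS : shiftedVdm (twoStaircase n ℓ ℓ') (fun i => X i)
        = S * vdmProd (fun i => X i))
    (S' : MvPolynomial (Fin (2 * (n - 1))) ℂ)
    (hS' : shiftedVdm (twoStaircase (n - 1) ℓ ℓ') (fun i => X i)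
        = S' * vdmProd (fun i => X i)) :
    aeval (fun v : Fin (2 * n) =>
      if hv : (v : ℕ) < 2 * n - 2 then
        (X (Sum.inl ⟨(v : ℕ), hv⟩) : MvPolynomial (Fin (2 * n - 2) ⊕ Unit) ℂ)
      else if (v : ℕ) = 2 * n - 2 then X (Sum.inr ())
      else C (qRoot (ℓ + 2) ^ k) * X (Sum.inr ())) S
    =
    X (Sum.inr ()) ^ ℓ' *
      C (∑ t ∈ Finset.range (ℓ' + 1), qRoot (ℓ + 2) ^ (k * t)) *
      (∏ m : Fin (2 * n - 2), ∏ t ∈ (Finset.Icc 1 (ℓ + 1)).erase k,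
        (X (Sum.inl m) - C (qRoot (ℓ + 2) ^ t) * X (Sum.inr ()))) *
      aeval (fun j : Fin (2 * (n - 1)) =>
        (X (Sum.inl (⟨(j : ℕ), by have := j.isLt; omega⟩ : Fin (2 * n - 2)))
          : MvPolynomial (Fin (2 * n - 2) ⊕ Unit) ℂ)) S' := by
  obtain ⟨p, rfl⟩ : ∃ p, n = p + 2 := ⟨n - 2, by omega⟩
  have hq : qRoot (ℓ + 2) ^ k ≠ 1 :=
    (Complex.isPrimitiveRoot_exp _ (by omega)).pow_ne_one_of_pos_of_lt (by omega) (by omega)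
  have key := aeval_twoStaircase_append (A := MvPolynomial (Fin (2 * (p + 2) - 2) ⊕ Unit) ℂ)
    (mem_Icc.2 ⟨hk1, hk2⟩) hS hS' (fun i => X (Sum.inl i)) (X (Sum.inr ()))
    (vdmProd_append_X_ne_zero hq)
  refine (congrArg (fun f => aeval f S) ?_).trans key
  funext v
  refine Fin.addCases (m := 2 * p + 2) (n := 2) (fun i => ?_) (fun j => ?_) v
  · rw [Fin.append_left, dif_pos (by simp; omega)]
    rfl
  · rw [Fin.append_right, dif_neg (by simp; omega)]
    fin_cases j
    · rw [if_pos (by simp; omega)]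
      rfl
    · rw [if_neg (by simp; omega)]
      rfl
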